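/- arXiv:1304.6934 — 2 statements merged into one kernel-verified Lean document; each statement's English description precedes it below -/
import Mathlib

section
/- Let D ≥ 1 be an integer, g_c := D^D/(D+1)^{D+1}, and let G_LO : [0, g_c] → ℝ assign to each g the unique solution G ∈ [1, (D+1)/D] of G = 1 + g·G^{D+1}. Then lim_{g→g_c⁻} √(1 − g/g_c) · G_LO'(g) = ((D+1)/D)^{D+2} · √(D/(2(D+1))); i.e., the derivative of G_LO diverges like (1 − g/g_c)^{−1/2} at the critical coupling. -/
/-!
On `[1, (D+1)/D]` the melonic equation is inverted by `f(G) = (G - 1)/G^(D+1)`, which increases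
strictly up to its maximum `f((D+1)/D) = g_c`, where `f'(G) = D((D+1)/D - G)/G^(D+2)` vanishes to
first order. So `G_LO` is the inverse of `f`, `G_LO' = 1/f'(G_LO)`, and by l'Hôpital
`g_c - f(G) ~ (k/2)((D+1)/D - G)^2` with `k = D/((D+1)/D)^(D+2)`. Hence
`√(g_c - g) · G_LO'(g) → √(k/2)/k`, and dividing by `√g_c` gives the constant.
-/

open Filter Set Topology

section SecondOrder

variable {f f' : ℝ → ℝ} {b k : ℝ}

theorem tendsto_sub_div_sq_nhdsLT (hderiv : ∀ᶠ t in 𝓝[<] b, HasDerivAt f (f' t) t)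
    (hcont : ContinuousWithinAt f (Iio b) b)
    (hk : Tendsto (fun t => f' t / (b - t)) (𝓝[<] b) (𝓝 k)) :
    Tendsto (fun t => (f b - f t) / (b - t) ^ 2) (𝓝[<] b) (𝓝 (k / 2)) := by
  have hlt : ∀ᶠ t in 𝓝[<] b, t < b := self_mem_nhdsWithin
  refine HasDerivAt.lhopital_zero_nhdsLT (f' := fun t => -f' t) (g' := fun t => -(2 * (b - t)))
    ?_ ?_ ?_ ?_ ?_ ?_
  · filter_upwards [hderiv] with t ht using ht.const_sub _
  · filter_upwards with t
    simpa using ((hasDerivAt_id' t).const_sub b).fun_pow 2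
  · filter_upwards [hlt] with t ht
    simpa [sub_eq_zero] using ht.ne'
  · simpa using hcont.tendsto.const_sub (f b)
  · exact ((by fun_prop : Continuous fun t : ℝ => (b - t) ^ 2).tendsto' b 0 (by simp)).mono_left
      nhdsWithin_le_nhds
  · refine (hk.div_const 2).congr' ?_
    filter_upwards with t
    rw [neg_div_neg_eq, div_div, mul_comm]

theorem tendsto_sqrt_sub_div_deriv_nhdsLT (hderiv : ∀ᶠ t in 𝓝[<] b, HasDerivAt f (f' t) t)
    (hcont : ContinuousWithinAt f (Iio b) b)
    (hk : Tendsto (fun t => f' t / (b - t)) (𝓝[<] b) (𝓝 k)) (hk0 : k ≠ 0) :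
    Tendsto (fun t => √(f b - f t) / f' t) (𝓝[<] b) (𝓝 (√(k / 2) / k)) := by
  refine ((tendsto_sub_div_sq_nhdsLT hderiv hcont hk).sqrt.div hk hk0).congr' ?_
  filter_upwards [self_mem_nhdsWithin] with t (ht : t < b)
  rw [Pi.div_apply, Real.sqrt_div' _ (sq_nonneg _), Real.sqrt_sq (sub_pos.2 ht).le,
    div_div_div_cancel_right₀ (sub_pos.2 ht).ne']

end SecondOrder

section RightInverse

variable {f f' G : ℝ → ℝ} {a b k : ℝ}

theorem mapsTo_Ioo_of_rightInvOn (hG : MapsTo G (Icc (f a) (f b)) (Icc a b))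
    (hfG : RightInvOn G f (Icc (f a) (f b))) : MapsTo G (Ioo (f a) (f b)) (Ioo a b) := by
  intro y hy
  have hGy := hG (Ioo_subset_Icc_self hy)
  have hfGy : f (G y) = y := hfG (Ioo_subset_Icc_self hy)
  refine ⟨hGy.1.lt_of_ne ?_, hGy.2.lt_of_ne ?_⟩ <;> rintro rfl
  · exact hy.1.ne hfGy
  · exact hy.2.ne hfGy.symm

namespace StrictMonoOn

theorem leftInvOn_of_rightInvOn (hf : StrictMonoOn f (Icc a b))
    (hG : MapsTo G (Icc (f a) (f b)) (Icc a b)) (hfG : RightInvOn G f (Icc (f a) (f b))) :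
    LeftInvOn G f (Icc a b) := fun _ hx =>
  hf.injOn (hG (hf.monotoneOn.mapsTo_Icc hx)) hx (hfG (hf.monotoneOn.mapsTo_Icc hx))

theorem strictMonoOn_of_rightInvOn (hf : StrictMonoOn f (Icc a b))
    (hG : MapsTo G (Icc (f a) (f b)) (Icc a b)) (hfG : RightInvOn G f (Icc (f a) (f b))) :
    StrictMonoOn G (Icc (f a) (f b)) := by
  intro y₁ hy₁ y₂ hy₂ hlt
  by_contra! hle
  have := hf.monotoneOn (hG hy₂) (hG hy₁) hle
  rw [hfG hy₁, hfG hy₂] at this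
  exact hlt.not_ge this

theorem image_Icc_of_rightInvOn (hf : StrictMonoOn f (Icc a b))
    (hG : MapsTo G (Icc (f a) (f b)) (Icc a b)) (hfG : RightInvOn G f (Icc (f a) (f b))) :
    G '' Icc (f a) (f b) = Icc a b :=
  (InvOn.bijOn ⟨hfG, hf.leftInvOn_of_rightInvOn hG hfG⟩ hG hf.monotoneOn.mapsTo_Icc).image_eq

theorem continuousAt_of_rightInvOn (hf : StrictMonoOn f (Icc a b))
    (hG : MapsTo G (Icc (f a) (f b)) (Icc a b)) (hfG : RightInvOn G f (Icc (f a) (f b)))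
    {y : ℝ} (hy : y ∈ Ioo (f a) (f b)) : ContinuousAt G y := by
  have hGy := mapsTo_Ioo_of_rightInvOn hG hfG hy
  refine (hf.strictMonoOn_of_rightInvOn hG hfG).continuousAt_of_image_mem_nhds
    (Icc_mem_nhds hy.1 hy.2) ?_
  rw [hf.image_Icc_of_rightInvOn hG hfG]
  exact Icc_mem_nhds hGy.1 hGy.2

theorem hasDerivAt_of_rightInvOn (hf : StrictMonoOn f (Icc a b))
    (hG : MapsTo G (Icc (f a) (f b)) (Icc a b)) (hfG : RightInvOn G f (Icc (f a) (f b)))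
    {f' y : ℝ} (hy : y ∈ Ioo (f a) (f b)) (hderiv : HasDerivAt f f' (G y)) (hf' : f' ≠ 0) :
    HasDerivAt G f'⁻¹ y :=
  hderiv.of_local_left_inverse (hf.continuousAt_of_rightInvOn hG hfG hy) hf'
    (eventually_of_mem (Icc_mem_nhds hy.1 hy.2) hfG)

theorem tendsto_nhdsLT_of_rightInvOn (hf : StrictMonoOn f (Icc a b))
    (hG : MapsTo G (Icc (f a) (f b)) (Icc a b)) (hfG : RightInvOn G f (Icc (f a) (f b)))
    (hab : a < b) : Tendsto G (𝓝[<] (f b)) (𝓝[<] b) := by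
  have hfab : f a < f b := hf ⟨le_rfl, hab.le⟩ ⟨hab.le, le_rfl⟩ hab
  have hGb : G (f b) = b := hf.leftInvOn_of_rightInvOn hG hfG ⟨hab.le, le_rfl⟩
  have hcont : ContinuousWithinAt G (Iic (f b)) (f b) := by
    refine (hf.strictMonoOn_of_rightInvOn hG hfG).continuousWithinAt_left_of_image_mem_nhdsWithin
      (Icc_mem_nhdsLE hfab) ?_
    rw [hf.image_Icc_of_rightInvOn hG hfG, hGb]
    exact Icc_mem_nhdsLE hab
  refine tendsto_nhdsWithin_iff.2 ⟨?_, ?_⟩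
  · simpa only [hGb] using (hcont.mono Iio_subset_Iic_self).tendsto
  · filter_upwards [Ioo_mem_nhdsLT hfab] with y hy
    exact (mapsTo_Ioo_of_rightInvOn hG hfG hy).2

theorem tendsto_sqrt_sub_mul_deriv_rightInvOn (hf : StrictMonoOn f (Icc a b))
    (hG : MapsTo G (Icc (f a) (f b)) (Icc a b)) (hfG : RightInvOn G f (Icc (f a) (f b)))
    (hab : a < b) (hderiv : ∀ t ∈ Ioo a b, HasDerivAt f (f' t) t)
    (hcont : ContinuousWithinAt f (Iio b) b)
    (hk : Tendsto (fun t => f' t / (b - t)) (𝓝[<] b) (𝓝 k)) (hk0 : k ≠ 0) :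
    Tendsto (fun y => √(f b - y) * deriv G y) (𝓝[<] (f b)) (𝓝 (√(k / 2) / k)) := by
  have hfab : f a < f b := hf ⟨le_rfl, hab.le⟩ ⟨hab.le, le_rfl⟩ hab
  have hderiv_ne : ∀ᶠ t in 𝓝[<] b, f' t ≠ 0 := by
    filter_upwards [hk.eventually_ne hk0] with t ht h
    simp [h] at ht
  have hGlim := hf.tendsto_nhdsLT_of_rightInvOn hG hfG hab
  refine ((tendsto_sqrt_sub_div_deriv_nhdsLT (eventually_of_mem (Ioo_mem_nhdsLT hab) hderiv)
    hcont hk hk0).comp hGlim).congr' ?_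
  filter_upwards [Ioo_mem_nhdsLT hfab, hGlim.eventually hderiv_ne] with y hy hy'
  have hGy := mapsTo_Ioo_of_rightInvOn hG hfG hy
  rw [Function.comp_apply, hfG (Ioo_subset_Icc_self hy), div_eq_mul_inv,
    (hf.hasDerivAt_of_rightInvOn hG hfG hy (hderiv _ hGy) hy').deriv]

end StrictMonoOn

end RightInverse

noncomputable def melonicCoupling (D : ℕ) (t : ℝ) : ℝ := (t - 1) / t ^ (D + 1)

section Melonic

variable {D : ℕ}

theorem melonicCoupling_eq_of_eq_one_add_mul_pow {g t : ℝ} (ht : t ≠ 0)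
    (h : t = 1 + g * t ^ (D + 1)) :
    melonicCoupling D t = g := by
  rw [melonicCoupling, div_eq_iff (pow_ne_zero _ ht)]
  linarith

theorem melonicCoupling_one : melonicCoupling D 1 = 0 := by simp [melonicCoupling]

theorem melonicCoupling_critical (hD : (D : ℝ) ≠ 0) :
    melonicCoupling D (((D : ℝ) + 1) / D) = D ^ D / (D + 1) ^ (D + 1) := by
  rw [melonicCoupling, div_pow]
  field_simp
  ring

theorem hasDerivAt_melonicCoupling {t : ℝ} (ht : t ≠ 0) :
    HasDerivAt (melonicCoupling D) ((D + 1 - D * t) / t ^ (D + 2)) t := by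
  have := ((hasDerivAt_id' t).sub_const 1).fun_div (hasDerivAt_pow (D + 1) t) (pow_ne_zero _ ht)
  refine this.congr_deriv ?_
  rw [Nat.add_sub_cancel]
  field_simp
  push_cast
  ring

theorem strictMonoOn_melonicCoupling :
    StrictMonoOn (melonicCoupling D) (Icc 1 (((D : ℝ) + 1) / D)) := by
  refine strictMonoOn_of_deriv_pos (convex_Icc _ _) ?_ fun t ht => ?_
  · exact fun t ht =>
      (hasDerivAt_melonicCoupling (one_pos.trans_le ht.1).ne').continuousAt.continuousWithinAt
  · rw [interior_Icc] at ht
    have ht0 : 0 < t := one_pos.trans ht.1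
    rw [(hasDerivAt_melonicCoupling ht0.ne').deriv]
    have : (D : ℝ) * t < D + 1 := by
      rcases (Nat.cast_nonneg (α := ℝ) D).eq_or_lt with hD | hD
      · rw [← hD]; norm_num
      · exact (lt_div_iff₀' hD).1 ht.2
    exact div_pos (by linarith) (by positivity)

theorem tendsto_deriv_melonicCoupling_div_nhdsLT (hD : (D : ℝ) ≠ 0) :
    Tendsto (fun t => ((D + 1 - D * t) / t ^ (D + 2)) / (((D : ℝ) + 1) / D - t))
      (𝓝[<] (((D : ℝ) + 1) / D)) (𝓝 (D / (((D : ℝ) + 1) / D) ^ (D + 2))) := by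
  have hcont : ContinuousAt (fun t : ℝ => D / t ^ (D + 2)) ((D + 1) / D) :=
    continuousAt_const.div (continuousAt_pow _ _) (by positivity)
  refine Tendsto.congr' ?_ (hcont.tendsto.mono_left nhdsWithin_le_nhds)
  filter_upwards [self_mem_nhdsWithin] with t (ht : t < (D + 1) / D)
  have hnum : (D + 1 - D * t : ℝ) = ((D + 1) / D - t) * D := by field_simp
  rw [hnum, mul_div_assoc, mul_div_cancel_left₀ _ (sub_pos.2 ht).ne']

end Melonic

theorem critical_amplitude_eq (D : ℕ) (hD : (D : ℝ) ≠ 0) :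
    (√((D : ℝ) ^ D / (D + 1) ^ (D + 1)))⁻¹ *
        (√(D / (((D : ℝ) + 1) / D) ^ (D + 2) / 2) / (D / (((D : ℝ) + 1) / D) ^ (D + 2))) =
      (((D : ℝ) + 1) / D) ^ (D + 2) * √(D / (2 * (D + 1))) := by
  rw [← sq_eq_sq₀ (by positivity) (by positivity), mul_pow, mul_pow, inv_pow, div_pow,
    Real.sq_sqrt (by positivity), Real.sq_sqrt (by positivity), Real.sq_sqrt (by positivity),
    div_pow ((D : ℝ) + 1)]
  field_simp
  ring

/-- Let `D ≥ 1`, `g_c := D^D/(D+1)^(D+1)`, and let `G_LO : [0, g_c] → ℝ` assign to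
each `g` the unique solution `G ∈ [1, (D+1)/D]` of `G = 1 + g·G^(D+1)`. Then
`lim_{g→g_c⁻} √(1 − g/g_c) · G_LO'(g) = ((D+1)/D)^(D+2) · √(D/(2(D+1)))`. -/
theorem melonic_two_point_derivative_divergence (D : ℕ) (hD : 1 ≤ D) (G_LO : ℝ → ℝ)
    (hG : ∀ g ∈ Set.Icc (0 : ℝ) ((D : ℝ) ^ D / ((D : ℝ) + 1) ^ (D + 1)),
      G_LO g ∈ Set.Icc (1 : ℝ) (((D : ℝ) + 1) / D) ∧ G_LO g = 1 + g * (G_LO g) ^ (D + 1)) :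
    Filter.Tendsto
      (fun g : ℝ => Real.sqrt (1 - g / ((D : ℝ) ^ D / ((D : ℝ) + 1) ^ (D + 1))) * deriv G_LO g)
      (nhdsWithin ((D : ℝ) ^ D / ((D : ℝ) + 1) ^ (D + 1))
        (Set.Iio ((D : ℝ) ^ D / ((D : ℝ) + 1) ^ (D + 1))))
      (nhds ((((D : ℝ) + 1) / D) ^ (D + 2) * Real.sqrt ((D : ℝ) / (2 * ((D : ℝ) + 1))))) := by
  have hD0 : (D : ℝ) ≠ 0 := Nat.cast_ne_zero.2 (by omega)
  have hx₀ : 1 < ((D : ℝ) + 1) / D := (one_lt_div (by positivity)).2 (lt_add_one _)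
  rw [← melonicCoupling_one (D := D), ← melonicCoupling_critical hD0] at hG
  have hlim := strictMonoOn_melonicCoupling.tendsto_sqrt_sub_mul_deriv_rightInvOn
    (fun g hg => (hG g hg).1)
    (fun g hg => melonicCoupling_eq_of_eq_one_add_mul_pow (by linarith [(hG g hg).1.1]) (hG g hg).2)
    hx₀ (fun t ht => hasDerivAt_melonicCoupling (by linarith [ht.1]))
    (hasDerivAt_melonicCoupling (by positivity)).continuousAt.continuousWithinAt
    (tendsto_deriv_melonicCoupling_div_nhdsLT hD0) (by positivity)
  rw [melonicCoupling_critical hD0] at hlim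
  rw [← critical_amplitude_eq D hD0]
  refine (hlim.const_mul _).congr fun g => ?_
  rw [← mul_assoc, ← Real.sqrt_inv, ← Real.sqrt_mul (by positivity)]
  field_simp
end

section
/- Let D ≥ 3 be an integer, g_c := D^D/(D+1)^{D+1}, and define G_NLO(g) := (D(D+1)/2)·g²·G_LO(g)^{2D+2} / ((2 − G_LO(g))·(1 − g·D·G_LO(g)^{D+1})) for 0 ≤ g < g_c, where G_LO(g) is the unique solution G ∈ [1, (D+1)/D] of G = 1 + g·G^{D+1}. Then G_NLO is real-analytic on a neighbourhood of 0, all coefficients of its Taylor series at 0 are nonnegative, and the radius of convergence of this Taylor series is exactly g_c; i.e., the next-to-leading-order series has the same radius of convergence as the leading-order melonic series. -/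
/-!
The Taylor series of `G_LO` at `0` is the formal power series `A = 1 + X A ^ (D + 1)`, whose
coefficients are nonnegative. For `x ≥ 0` the partial sums of `A` at `x` are bounded by every
`G ≥ 0` with `1 + x G ^ (D + 1) ≤ G`, so `A` converges there to a solution of the same equation;
below `g_c` the map `y ↦ 1 + x y ^ (D + 1)` contracts `[0, (D + 1) / D]`, so that sum is `G_LO x`.
Since `2 - G = 1 - x G ^ (D + 1)`, `G_NLO` is the sum of a product of powers of `A` and of the
geometric series in `X A ^ (D + 1)` and `D X A ^ (D + 1)`, all with nonnegative coefficients, and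
it converges for `|x| < g_c`. Conversely `L - 1 ≤ g_c L ^ (D + 1)` for `L ≥ 0`, so
`L = 1 + x L ^ (D + 1)` has no solution `L ≥ 0` once `x > g_c`: there `A` diverges, and with it the
series of `G_NLO`, whose coefficients dominate those of `X ^ 2 A` up to a positive factor.
-/

open PowerSeries Finset

lemma sum_range_sum_antidiagonal_le {a b : ℕ → ℝ} (ha : ∀ n, 0 ≤ a n) (hb : ∀ n, 0 ≤ b n)
    (N : ℕ) :
    ∑ n ∈ range N, ∑ p ∈ antidiagonal n, a p.1 * b p.2 ≤
      (∑ n ∈ range N, a n) * ∑ n ∈ range N, b n := by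
  simp only [Finset.Nat.sum_antidiagonal_eq_sum_range_succ fun i j => a i * b j,
    Nat.succ_eq_add_one]
  rw [sum_range_diag_flip N fun i j => a i * b j]
  simp only [← mul_sum, sum_mul]
  gcongr with m
  · exact ha m
  · exact fun n _ _ => hb n
  · exact Nat.sub_le N m

namespace PowerSeries

section CommSemiring

variable {R : Type*} [CommSemiring R] {f g : R⟦X⟧} {n : ℕ}

lemma trunc_pow_congr (h : trunc n f = trunc n g) (m : ℕ) : trunc n (f ^ m) = trunc n (g ^ m) := by
  rw [← trunc_trunc_pow, h, trunc_trunc_pow]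

lemma trunc_one_add_X_mul_congr (h : trunc n f = trunc n g) :
    trunc (n + 1) (1 + X * f) = trunc (n + 1) (1 + X * g) := by
  rw [map_add, map_add]
  congr 1
  ext (_ | m)
  · simp [coeff_trunc]
  · simpa [coeff_trunc, coeff_succ_X_mul] using congrArg (Polynomial.coeff · m) h

lemma coeff_mul_mul_pow (f g : R⟦X⟧) (x : R) (n : ℕ) :
    coeff n (f * g) * x ^ n =
      ∑ p ∈ antidiagonal n, (coeff p.1 f * x ^ p.1) * (coeff p.2 g * x ^ p.2) := by
  rw [coeff_mul, sum_mul]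
  refine sum_congr rfl fun p hp => ?_
  rw [← mem_antidiagonal.1 hp, pow_add]
  ring

lemma sum_range_succ_coeff_one_add_X_mul (f : R⟦X⟧) (x : R) (N : ℕ) :
    ∑ n ∈ range (N + 1), coeff n (1 + X * f) * x ^ n =
      1 + x * ∑ n ∈ range N, coeff n f * x ^ n := by
  rw [sum_range_succ', mul_sum, add_comm]
  congr 1
  · simp
  · refine sum_congr rfl fun n _ => ?_
    rw [map_add, coeff_succ_X_mul, coeff_one, if_neg n.succ_ne_zero, pow_succ]
    ring

end CommSemiring

def HasAbsSumAt (f : ℝ⟦X⟧) (x s : ℝ) : Prop :=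
  Summable (fun n => ‖coeff n f * x ^ n‖) ∧ HasSum (fun n => coeff n f * x ^ n) s

section HasAbsSumAt

variable {f g : ℝ⟦X⟧} {x r s t : ℝ}

lemma hasAbsSumAt_monomial (k : ℕ) (c x : ℝ) : HasAbsSumAt (monomial k c) x (c * x ^ k) := by
  have h : (fun n => coeff n (monomial k c) * x ^ n) = fun n => if n = k then c * x ^ k else 0 := by
    funext n
    rw [coeff_monomial]
    split_ifs with hn <;> simp [hn]
  refine ⟨?_, h ▸ hasSum_ite_eq k _⟩
  refine (hasSum_ite_eq k ‖c * x ^ k‖).summable.congr fun n => ?_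
  rw [congrFun h n]
  split_ifs <;> simp

lemma hasAbsSumAt_C (c x : ℝ) : HasAbsSumAt (C c) x c := by
  simpa using hasAbsSumAt_monomial 0 c x

lemma hasAbsSumAt_one (x : ℝ) : HasAbsSumAt 1 x 1 := by
  simpa using hasAbsSumAt_C 1 x

lemma hasAbsSumAt_X (x : ℝ) : HasAbsSumAt X x x := by
  simpa [← X_eq] using hasAbsSumAt_monomial 1 1 x

namespace HasAbsSumAt

lemma unique (hs : HasAbsSumAt f x s) (ht : HasAbsSumAt f x t) : s = t :=
  hs.2.unique ht.2

lemma add (hf : HasAbsSumAt f x s) (hg : HasAbsSumAt g x t) : HasAbsSumAt (f + g) x (s + t) := by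
  refine ⟨(hf.1.add hg.1).of_nonneg_of_le (fun _ => norm_nonneg _) fun n => ?_, ?_⟩
  · rw [map_add, add_mul]
    exact norm_add_le _ _
  · simpa only [map_add, add_mul] using hf.2.add hg.2

lemma mul (hf : HasAbsSumAt f x s) (hg : HasAbsSumAt g x t) : HasAbsSumAt (f * g) x (s * t) := by
  have hprod := summable_norm_sum_mul_antidiagonal_of_summable_norm hf.1 hg.1
  simp only [← coeff_mul_mul_pow] at hprod
  refine ⟨hprod, ?_⟩
  rw [← hf.2.tsum_eq, ← hg.2.tsum_eq,
    tsum_mul_tsum_eq_tsum_sum_antidiagonal_of_summable_norm hf.1 hg.1]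
  simp only [← coeff_mul_mul_pow]
  exact hprod.of_norm.hasSum

lemma pow (hf : HasAbsSumAt f x s) (m : ℕ) : HasAbsSumAt (f ^ m) x (s ^ m) := by
  induction m with
  | zero => simpa using hasAbsSumAt_one x
  | succ m ih => simpa only [pow_succ] using ih.mul hf

lemma summable_of_abs_le (hf : HasAbsSumAt f r s) (hx : |x| ≤ r) :
    Summable fun n => coeff n f * x ^ n := by
  refine hf.1.of_norm_bounded fun n => ?_
  simp only [norm_mul, norm_pow, Real.norm_eq_abs]
  exact mul_le_mul_of_nonneg_left (pow_le_pow_left₀ (abs_nonneg x) (hx.trans (le_abs_self r)) n)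
    (abs_nonneg _)

end HasAbsSumAt

end HasAbsSumAt

def CoeffsNonneg (f : ℝ⟦X⟧) : Prop := ∀ n, 0 ≤ coeff n f

section CoeffsNonneg

variable {f g : ℝ⟦X⟧} {x s : ℝ}

lemma coeffsNonneg_monomial (k : ℕ) {c : ℝ} (hc : 0 ≤ c) : CoeffsNonneg (monomial k c) :=
  fun n => by rw [coeff_monomial]; split_ifs <;> simp [hc]

lemma coeffsNonneg_C {c : ℝ} (hc : 0 ≤ c) : CoeffsNonneg (C c) := by
  rw [← monomial_zero_eq_C_apply]
  exact coeffsNonneg_monomial 0 hc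

lemma coeffsNonneg_one : CoeffsNonneg 1 :=
  fun n => by rw [coeff_one]; split_ifs <;> norm_num

lemma coeffsNonneg_X : CoeffsNonneg X := by
  simpa [← X_eq] using coeffsNonneg_monomial 1 zero_le_one

namespace CoeffsNonneg

lemma add (hf : CoeffsNonneg f) (hg : CoeffsNonneg g) : CoeffsNonneg (f + g) :=
  fun n => by rw [map_add]; exact add_nonneg (hf n) (hg n)

lemma mul (hf : CoeffsNonneg f) (hg : CoeffsNonneg g) : CoeffsNonneg (f * g) :=
  fun n => by rw [coeff_mul]; exact sum_nonneg fun p _ => mul_nonneg (hf p.1) (hg p.2)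

lemma pow (hf : CoeffsNonneg f) (m : ℕ) : CoeffsNonneg (f ^ m) := by
  induction m with
  | zero => simpa using coeffsNonneg_one
  | succ m ih => simpa only [pow_succ] using ih.mul hf

lemma coeff_mul_pow_nonneg (hf : CoeffsNonneg f) (hx : 0 ≤ x) (n : ℕ) :
    0 ≤ coeff n f * x ^ n :=
  mul_nonneg (hf n) (pow_nonneg hx n)

lemma coeff_mul_constantCoeff_le (hf : CoeffsNonneg f) (hg : CoeffsNonneg g) (n : ℕ) :
    coeff n f * constantCoeff g ≤ coeff n (f * g) := by
  rw [coeff_mul, ← coeff_zero_eq_constantCoeff_apply]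
  exact single_le_sum (f := fun p : ℕ × ℕ => coeff p.1 f * coeff p.2 g)
    (fun p _ => mul_nonneg (hf p.1) (hg p.2)) (a := (n, 0)) (by simp)

lemma sum_range_coeff_mul_le (hf : CoeffsNonneg f) (hg : CoeffsNonneg g) (hx : 0 ≤ x) (N : ℕ) :
    ∑ n ∈ range N, coeff n (f * g) * x ^ n ≤
      (∑ n ∈ range N, coeff n f * x ^ n) * ∑ n ∈ range N, coeff n g * x ^ n := by
  simp only [coeff_mul_mul_pow]
  exact sum_range_sum_antidiagonal_le (hf.coeff_mul_pow_nonneg hx) (hg.coeff_mul_pow_nonneg hx) N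

lemma sum_range_coeff_le (hf : CoeffsNonneg f) (hx : 0 ≤ x) (h : HasAbsSumAt f x s) (N : ℕ) :
    ∑ n ∈ range N, coeff n f * x ^ n ≤ s :=
  sum_le_hasSum _ (fun n _ => hf.coeff_mul_pow_nonneg hx n) h.2

lemma sum_range_coeff_pow_le (hf : CoeffsNonneg f) (hx : 0 ≤ x) (m N : ℕ) :
    ∑ n ∈ range N, coeff n (f ^ m) * x ^ n ≤ (∑ n ∈ range N, coeff n f * x ^ n) ^ m := by
  induction m with
  | zero => simpa using coeffsNonneg_one.sum_range_coeff_le hx (hasAbsSumAt_one x) N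
  | succ m ih =>
    rw [pow_succ, pow_succ]
    exact (sum_range_coeff_mul_le (hf.pow m) hf hx N).trans <|
      mul_le_mul_of_nonneg_right ih (sum_nonneg fun n _ => hf.coeff_mul_pow_nonneg hx n)

lemma nonneg_of_hasAbsSumAt (hf : CoeffsNonneg f) (hx : 0 ≤ x) (h : HasAbsSumAt f x s) : 0 ≤ s :=
  h.2.nonneg (hf.coeff_mul_pow_nonneg hx)

lemma hasAbsSumAt_tsum (hf : CoeffsNonneg f) (hx : 0 ≤ x)
    (h : Summable fun n => coeff n f * x ^ n) : HasAbsSumAt f x (∑' n, coeff n f * x ^ n) :=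
  ⟨h.congr fun n => (Real.norm_of_nonneg (hf.coeff_mul_pow_nonneg hx n)).symm, h.hasSum⟩

lemma summable_abs (hf : CoeffsNonneg f) (h : Summable fun n => coeff n f * x ^ n) :
    Summable fun n => coeff n f * |x| ^ n :=
  h.abs.congr fun n => by rw [abs_mul, abs_pow, abs_of_nonneg (hf n)]

lemma summable_of_summable_mul (hf : CoeffsNonneg f) (hg : CoeffsNonneg g)
    (hg₀ : 0 < constantCoeff g) (hx : 0 ≤ x) (h : Summable fun n => coeff n (f * g) * x ^ n) :
    Summable fun n => coeff n f * x ^ n := by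
  refine (h.mul_left (constantCoeff g)⁻¹).of_nonneg_of_le (hf.coeff_mul_pow_nonneg hx) fun n => ?_
  rw [inv_mul_eq_div, le_div_iff₀ hg₀, mul_right_comm]
  exact mul_le_mul_of_nonneg_right (hf.coeff_mul_constantCoeff_le hg n) (pow_nonneg hx n)

end CoeffsNonneg

end CoeffsNonneg

lemma summable_of_summable_X_pow_mul (f : ℝ⟦X⟧) (k : ℕ) {x : ℝ} (hx : x ≠ 0)
    (h : Summable fun n => coeff n (X ^ k * f) * x ^ n) : Summable fun n => coeff n f * x ^ n := by
  rw [← summable_mul_right_iff (pow_ne_zero k hx)]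
  refine ((summable_nat_add_iff k).2 h).congr fun n => ?_
  rw [coeff_X_pow_mul, pow_add]
  ring

section Geometric

variable {u : ℝ⟦X⟧} {x U : ℝ}

lemma inv_one_sub_X_mul_eq {k : Type*} [Field k] (u : k⟦X⟧) :
    (1 - X * u)⁻¹ = 1 + X * (u * (1 - X * u)⁻¹) := by
  have h := PowerSeries.mul_inv_cancel (1 - X * u) (by simp)
  linear_combination h

lemma CoeffsNonneg.inv_one_sub_X_mul (hu : CoeffsNonneg u) : CoeffsNonneg (1 - X * u)⁻¹ := by
  intro n
  induction n using Nat.strong_induction_on with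
  | _ n ih =>
    rw [inv_one_sub_X_mul_eq]
    rcases n with _ | n
    · simp
    · rw [map_add, coeff_succ_X_mul, coeff_mul, coeff_one, if_neg n.succ_ne_zero, zero_add]
      exact sum_nonneg fun p hp =>
        mul_nonneg (hu p.1) (ih p.2 (by have := mem_antidiagonal.1 hp; omega))

lemma sum_range_coeff_inv_one_sub_X_mul_le (hu : CoeffsNonneg u) (hx : 0 ≤ x)
    (h : HasAbsSumAt u x U) (hU : x * U < 1) (N : ℕ) :
    ∑ n ∈ range N, coeff n (1 - X * u)⁻¹ * x ^ n ≤ (1 - x * U)⁻¹ := by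
  set v := (1 - X * u)⁻¹ with hv_def
  have hv := hu.inv_one_sub_X_mul
  have hU₀ := hu.nonneg_of_hasAbsSumAt hx h
  set S := ∑ n ∈ range (N + 1), coeff n v * x ^ n
  have hmono : ∑ n ∈ range N, coeff n v * x ^ n ≤ S :=
    sum_le_sum_of_subset_of_nonneg (range_mono N.le_succ) fun n _ _ => hv.coeff_mul_pow_nonneg hx n
  have hrec : S ≤ 1 + x * U * S :=
    calc S = 1 + x * ∑ n ∈ range N, coeff n (u * v) * x ^ n := by
          simp only [S]
          conv_lhs => rw [hv_def, inv_one_sub_X_mul_eq, ← hv_def]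
          exact sum_range_succ_coeff_one_add_X_mul _ x N
      _ ≤ 1 + x * ((∑ n ∈ range N, coeff n u * x ^ n) * ∑ n ∈ range N, coeff n v * x ^ n) := by
          gcongr
          exact hu.sum_range_coeff_mul_le hv hx N
      _ ≤ 1 + x * U * S := by
          rw [mul_assoc]
          gcongr
          · exact sum_nonneg fun n _ => hv.coeff_mul_pow_nonneg hx n
          · exact hu.sum_range_coeff_le hx h N
  rw [← one_div, le_div_iff₀ (by linarith)]
  nlinarith

lemma hasAbsSumAt_inv_one_sub_X_mul (hu : CoeffsNonneg u) (hx : 0 ≤ x) (h : HasAbsSumAt u x U)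
    (hU : x * U < 1) : HasAbsSumAt (1 - X * u)⁻¹ x (1 - x * U)⁻¹ := by
  have hv := hu.inv_one_sub_X_mul
  have hs := hv.hasAbsSumAt_tsum hx <| summable_of_sum_range_le (hv.coeff_mul_pow_nonneg hx)
    (sum_range_coeff_inv_one_sub_X_mul_le hu hx h hU)
  have hrec := (hasAbsSumAt_one x).add ((hasAbsSumAt_X x).mul (h.mul hs))
  rw [← inv_one_sub_X_mul_eq] at hrec
  convert hs using 1
  exact inv_eq_of_mul_eq_one_right (by linear_combination hs.unique hrec)

end Geometric

end PowerSeries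

namespace Melonic

noncomputable def criticalCoupling (D : ℕ) : ℝ := (D : ℝ) ^ D / ((D : ℝ) + 1) ^ (D + 1)

section FixedPoint

variable {D : ℕ} {x L G : ℝ}

lemma criticalCoupling_pos : 0 < criticalCoupling D := by
  rcases D with _ | D
  · norm_num [criticalCoupling]
  · unfold criticalCoupling; positivity

-- `criticalCoupling D` is the maximum of `(y - 1) / y ^ (D + 1)`, attained at `y = (D + 1) / D`.
lemma natCast_mul_criticalCoupling_mul_pow (hD : 0 < D) :
    D * criticalCoupling D * (((D : ℝ) + 1) / D) ^ (D + 1) = 1 := by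
  have h₀ : (D : ℝ) ≠ 0 := by positivity
  have h₁ : (D : ℝ) + 1 ≠ 0 := by positivity
  unfold criticalCoupling
  rw [div_pow]
  field_simp
  ring

lemma sub_one_le_criticalCoupling_mul_pow (hD : 0 < D) (hL : 0 ≤ L) :
    L - 1 ≤ criticalCoupling D * L ^ (D + 1) := by
  have hD' : (0 : ℝ) < D := by exact_mod_cast hD
  set m := (D : ℝ) * L / (D + 1)
  -- `m = 1` at the maximiser `L = (D + 1) / D`; the claim is Bernoulli's inequality at `m`.
  have hbern : 1 + ((D : ℝ) + 1) * (m - 1) ≤ m ^ (D + 1) := by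
    have : 0 ≤ m := by positivity
    simpa using one_add_mul_le_pow (a := m - 1) (by linarith) (D + 1)
  have hm : D * (criticalCoupling D * L ^ (D + 1)) = m ^ (D + 1) := by
    have h₁ : (D : ℝ) + 1 ≠ 0 := by positivity
    unfold criticalCoupling m
    rw [div_pow, mul_pow]
    field_simp
    ring
  have hmL : ((D : ℝ) + 1) * m = D * L := by
    unfold m
    field_simp
  nlinarith

lemma mul_natCast_mul_pow_lt_one (hD : 0 < D) (hx : 0 ≤ x) (hxc : x < criticalCoupling D)
    (hG : G ∈ Set.Icc 0 (((D : ℝ) + 1) / D)) : x * D * G ^ (D + 1) < 1 := by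
  have hD' : (0 : ℝ) < D := by exact_mod_cast hD
  calc x * D * G ^ (D + 1) ≤ x * D * (((D : ℝ) + 1) / D) ^ (D + 1) := by
        gcongr
        exacts [hG.1, hG.2]
    _ < criticalCoupling D * D * (((D : ℝ) + 1) / D) ^ (D + 1) := by gcongr
    _ = 1 := by linear_combination natCast_mul_criticalCoupling_mul_pow hD

lemma eq_of_fixedPoint (hD : 0 < D) (hx : 0 ≤ x) (hxc : x < criticalCoupling D)
    (hL : L ∈ Set.Icc 0 (((D : ℝ) + 1) / D)) (hG : G ∈ Set.Icc 0 (((D : ℝ) + 1) / D))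
    (hLeq : L = 1 + x * L ^ (D + 1)) (hGeq : G = 1 + x * G ^ (D + 1)) : L = G := by
  set R := ((D : ℝ) + 1) / D
  have hDR : (D : ℝ) * R = D + 1 := by
    have : (D : ℝ) ≠ 0 := by positivity
    simp only [R]
    field_simp
  -- `y ↦ 1 + x y ^ (D + 1)` is a contraction of `[0, R]`, with constant `x (D + 1) R ^ D`
  have hk : x * ((D + 1) * R ^ D) < 1 := by
    calc x * ((D + 1) * R ^ D) = x * D * R ^ (D + 1) := by rw [← hDR, pow_succ]; ring
      _ < 1 := mul_natCast_mul_pow_lt_one hD hx hxc ⟨by positivity, le_rfl⟩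
  have hpow : |L ^ (D + 1) - G ^ (D + 1)| ≤ |L - G| * ((D + 1) * R ^ D) := by
    refine (abs_pow_sub_pow_le L G (D + 1)).trans ?_
    rw [Nat.add_sub_cancel, mul_assoc]
    push_cast
    gcongr
    rw [abs_of_nonneg hL.1, abs_of_nonneg hG.1]
    exact max_le hL.2 hG.2
  have hdiff : |L - G| ≤ x * ((D + 1) * R ^ D) * |L - G| := by
    have : L - G = x * (L ^ (D + 1) - G ^ (D + 1)) := by linear_combination hLeq - hGeq
    calc |L - G| = x * |L ^ (D + 1) - G ^ (D + 1)| := by rw [this, abs_mul, abs_of_nonneg hx]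
      _ ≤ x * (|L - G| * ((D + 1) * R ^ D)) := by gcongr
      _ = x * ((D + 1) * R ^ D) * |L - G| := by ring
  have : |L - G| = 0 := by nlinarith [abs_nonneg (L - G)]
  exact sub_eq_zero.1 (abs_eq_zero.1 this)

end FixedPoint

noncomputable def loIterate (D : ℕ) : ℕ → ℝ⟦X⟧
  | 0 => 0
  | k + 1 => 1 + X * loIterate D k ^ (D + 1)

/-- The Taylor series of `G_LO` at `0`. -/
noncomputable def loSeries (D : ℕ) : ℝ⟦X⟧ := mk fun n => coeff n (loIterate D (n + 1))

section LeadingOrder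

variable {D : ℕ} {x t G L : ℝ}

lemma trunc_loIterate_succ (k : ℕ) : trunc k (loIterate D (k + 1)) = trunc k (loIterate D k) := by
  induction k with
  | zero => simp
  | succ k ih => exact trunc_one_add_X_mul_congr (trunc_pow_congr ih (D + 1))

lemma trunc_loIterate_of_le {k l : ℕ} (h : k ≤ l) :
    trunc k (loIterate D l) = trunc k (loIterate D k) := by
  induction l, h using Nat.le_induction with
  | base => rfl
  | succ l hkl ih =>
    rw [← trunc_trunc_of_le (loIterate D (l + 1)) hkl, trunc_loIterate_succ,
      trunc_trunc_of_le _ hkl, ih]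

lemma trunc_loSeries (n : ℕ) : trunc n (loSeries D) = trunc n (loIterate D n) := by
  ext i
  simp only [coeff_trunc, loSeries, coeff_mk]
  split_ifs with hi
  · simpa [coeff_trunc] using
      (congrArg (Polynomial.coeff · i) (trunc_loIterate_of_le (D := D) hi)).symm
  · rfl

lemma loSeries_eq : loSeries D = 1 + X * loSeries D ^ (D + 1) := by
  ext n
  have h : trunc (n + 1) (loSeries D) = trunc (n + 1) (1 + X * loSeries D ^ (D + 1)) :=
    (trunc_loSeries (n + 1)).trans <|
      trunc_one_add_X_mul_congr (trunc_pow_congr (trunc_loSeries n).symm (D + 1))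
  rw [← coeff_coe_trunc_of_lt (f := loSeries D) (lt_add_one n), h,
    coeff_coe_trunc_of_lt (lt_add_one n)]

lemma constantCoeff_loSeries : constantCoeff (loSeries D) = 1 := by
  rw [loSeries_eq]
  simp

lemma coeffsNonneg_loIterate (k : ℕ) : CoeffsNonneg (loIterate D k) := by
  induction k with
  | zero => exact fun n => by simp [loIterate]
  | succ k ih => exact coeffsNonneg_one.add (coeffsNonneg_X.mul (ih.pow (D + 1)))

lemma coeffsNonneg_loSeries : CoeffsNonneg (loSeries D) := fun n => by
  rw [loSeries, coeff_mk]
  exact coeffsNonneg_loIterate _ n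

lemma eq_one_add_mul_pow_of_hasAbsSumAt_loSeries (h : HasAbsSumAt (loSeries D) x L) :
    L = 1 + x * L ^ (D + 1) := by
  have h' := (hasAbsSumAt_one x).add ((hasAbsSumAt_X x).mul (h.pow (D + 1)))
  rw [← loSeries_eq] at h'
  exact h.unique h'

lemma sum_range_coeff_loSeries_le (hx : 0 ≤ x) (hG : 0 ≤ G) (hGeq : 1 + x * G ^ (D + 1) ≤ G)
    (N : ℕ) : ∑ n ∈ range N, coeff n (loSeries D) * x ^ n ≤ G := by
  induction N with
  | zero => simpa using hG
  | succ N ih =>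
    have hS : 0 ≤ ∑ n ∈ range N, coeff n (loSeries D) * x ^ n :=
      sum_nonneg fun n _ => coeffsNonneg_loSeries.coeff_mul_pow_nonneg hx n
    calc ∑ n ∈ range (N + 1), coeff n (loSeries D) * x ^ n
        = 1 + x * ∑ n ∈ range N, coeff n (loSeries D ^ (D + 1)) * x ^ n := by
          conv_lhs => rw [loSeries_eq]
          exact sum_range_succ_coeff_one_add_X_mul _ x N
      _ ≤ 1 + x * (∑ n ∈ range N, coeff n (loSeries D) * x ^ n) ^ (D + 1) := by
          gcongr
          exact coeffsNonneg_loSeries.sum_range_coeff_pow_le hx _ N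
      _ ≤ 1 + x * G ^ (D + 1) := by gcongr
      _ ≤ G := hGeq

lemma exists_hasAbsSumAt_loSeries_le (hx : 0 ≤ x) (hG : 0 ≤ G)
    (hGeq : 1 + x * G ^ (D + 1) ≤ G) : ∃ L ≤ G, HasAbsSumAt (loSeries D) x L :=
  have hbound := sum_range_coeff_loSeries_le hx hG hGeq
  have hnonneg := (coeffsNonneg_loSeries (D := D)).coeff_mul_pow_nonneg hx
  ⟨_, Real.tsum_le_of_sum_range_le hnonneg hbound,
    coeffsNonneg_loSeries.hasAbsSumAt_tsum hx (summable_of_sum_range_le hnonneg hbound)⟩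

theorem hasAbsSumAt_loSeries (hD : 0 < D) (hx : 0 ≤ x) (hxc : x < criticalCoupling D)
    (hG : G ∈ Set.Icc 0 (((D : ℝ) + 1) / D)) (hGeq : G = 1 + x * G ^ (D + 1)) :
    HasAbsSumAt (loSeries D) x G := by
  obtain ⟨L, hLG, hL⟩ := exists_hasAbsSumAt_loSeries_le hx hG.1 hGeq.ge
  have hL₀ := coeffsNonneg_loSeries.nonneg_of_hasAbsSumAt hx hL
  rwa [← eq_of_fixedPoint hD hx hxc ⟨hL₀, hLG.trans hG.2⟩ hG
    (eq_one_add_mul_pow_of_hasAbsSumAt_loSeries hL) hGeq]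

theorem not_summable_loSeries (hD : 0 < D) (ht : criticalCoupling D < t) :
    ¬ Summable fun n => coeff n (loSeries D) * t ^ n := by
  intro hs
  have ht₀ : 0 ≤ t := criticalCoupling_pos.le.trans ht.le
  have hL := coeffsNonneg_loSeries.hasAbsSumAt_tsum ht₀ hs
  have hL₀ := coeffsNonneg_loSeries.nonneg_of_hasAbsSumAt ht₀ hL
  have hLeq := eq_one_add_mul_pow_of_hasAbsSumAt_loSeries hL
  set L := ∑' n, coeff n (loSeries D) * t ^ n
  have hpow : 0 < L ^ (D + 1) := pow_pos (by nlinarith [pow_nonneg hL₀ (D + 1)]) _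
  nlinarith [sub_one_le_criticalCoupling_mul_pow hD hL₀, mul_lt_mul_of_pos_right ht hpow]

end LeadingOrder

/-- The Taylor series of `G_NLO` at `0`; with `G = G_LO x`, the factor `(2 - G)⁻¹` is expanded
as `(1 - x G ^ (D + 1))⁻¹`, using the melonic equation. -/
noncomputable def nloSeries (D : ℕ) : ℝ⟦X⟧ :=
  C ((D : ℝ) * ((D : ℝ) + 1) / 2) * X ^ 2 * loSeries D ^ (2 * D + 2) *
    (1 - X * loSeries D ^ (D + 1))⁻¹ * (1 - X * (C (D : ℝ) * loSeries D ^ (D + 1)))⁻¹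

noncomputable def nloCofactor (D : ℕ) : ℝ⟦X⟧ :=
  C ((D : ℝ) * ((D : ℝ) + 1) / 2) * loSeries D ^ (2 * D + 1) *
    (1 - X * loSeries D ^ (D + 1))⁻¹ * (1 - X * (C (D : ℝ) * loSeries D ^ (D + 1)))⁻¹

section NextToLeadingOrder

variable {D : ℕ} {x G : ℝ}

lemma nloSeries_eq : nloSeries D = X ^ 2 * (loSeries D * nloCofactor D) := by
  unfold nloSeries nloCofactor
  ring

lemma coeffsNonneg_nloCofactor : CoeffsNonneg (nloCofactor D) := by
  have hA := coeffsNonneg_loSeries (D := D)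
  exact (((coeffsNonneg_C (by positivity)).mul (hA.pow _)).mul (hA.pow _).inv_one_sub_X_mul).mul
    ((coeffsNonneg_C D.cast_nonneg).mul (hA.pow _)).inv_one_sub_X_mul

lemma constantCoeff_nloCofactor :
    constantCoeff (nloCofactor D) = (D : ℝ) * ((D : ℝ) + 1) / 2 := by
  simp only [nloCofactor, map_mul, map_pow, map_sub, map_one, constantCoeff_C, constantCoeff_X,
    constantCoeff_inv, constantCoeff_loSeries, one_pow, mul_one, zero_mul, sub_zero, inv_one]

lemma coeffsNonneg_nloSeries : CoeffsNonneg (nloSeries D) := by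
  rw [nloSeries_eq]
  exact (coeffsNonneg_X.pow 2).mul (coeffsNonneg_loSeries.mul coeffsNonneg_nloCofactor)

theorem hasAbsSumAt_nloSeries (hD : 0 < D) (hx : 0 ≤ x) (hxc : x < criticalCoupling D)
    (hG : G ∈ Set.Icc 0 (((D : ℝ) + 1) / D)) (hGeq : G = 1 + x * G ^ (D + 1)) :
    HasAbsSumAt (nloSeries D) x (((D : ℝ) * ((D : ℝ) + 1) / 2) * x ^ 2 * G ^ (2 * D + 2) /
      ((2 - G) * (1 - x * D * G ^ (D + 1)))) := by
  have hA := hasAbsSumAt_loSeries hD hx hxc hG hGeq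
  have hsmall := mul_natCast_mul_pow_lt_one hD hx hxc hG
  have hD' : (1 : ℝ) ≤ D := by exact_mod_cast hD
  have hv₁ := hasAbsSumAt_inv_one_sub_X_mul (coeffsNonneg_loSeries.pow _) hx (hA.pow (D + 1))
    (by nlinarith [mul_nonneg hx (pow_nonneg hG.1 (D + 1))])
  have hv₂ := hasAbsSumAt_inv_one_sub_X_mul
    ((coeffsNonneg_C D.cast_nonneg).mul (coeffsNonneg_loSeries.pow _)) hx
    ((hasAbsSumAt_C _ x).mul (hA.pow (D + 1))) (by linarith)
  unfold nloSeries
  convert ((((hasAbsSumAt_C ((D : ℝ) * ((D : ℝ) + 1) / 2) x).mul ((hasAbsSumAt_X x).pow 2)).mul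
    (hA.pow (2 * D + 2))).mul hv₁).mul hv₂ using 1
  rw [show 2 - G = 1 - x * G ^ (D + 1) by linarith]
  field_simp

theorem not_summable_nloSeries (hD : 0 < D) (hx : criticalCoupling D < |x|) :
    ¬ Summable fun n => coeff n (nloSeries D) * x ^ n := by
  intro hs
  have hx₀ : 0 < |x| := criticalCoupling_pos.trans hx
  have hcofactor : 0 < constantCoeff (nloCofactor D) := by
    rw [constantCoeff_nloCofactor]
    positivity
  refine not_summable_loSeries hD hx (coeffsNonneg_loSeries.summable_of_summable_mul
    coeffsNonneg_nloCofactor hcofactor hx₀.le (summable_of_summable_X_pow_mul _ 2 hx₀.ne' ?_))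
  rw [← nloSeries_eq]
  exact coeffsNonneg_nloSeries.summable_abs hs

end NextToLeadingOrder

end Melonic

open Melonic

/-- Let `D ≥ 3`, `g_c := D^D/(D+1)^(D+1)`, `G_LO` the leading-order melonic
2-point function, and for `0 ≤ g < g_c` let
`G_NLO(g) := (D(D+1)/2)·g²·G_LO(g)^(2D+2) / ((2 − G_LO(g))·(1 − g·D·G_LO(g)^(D+1)))`.
Then `G_NLO` is real-analytic on a neighbourhood of `0`, all coefficients of its Taylor series
at `0` are nonnegative, and the radius of convergence of this Taylor series is exactly `g_c`. -/
theorem nlo_two_point_radius_of_convergence (D : ℕ) (hD : 3 ≤ D) (G_LO G_NLO : ℝ → ℝ)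
    (hG : ∀ g ∈ Set.Icc (0 : ℝ) ((D : ℝ) ^ D / ((D : ℝ) + 1) ^ (D + 1)),
      G_LO g ∈ Set.Icc (1 : ℝ) (((D : ℝ) + 1) / D) ∧ G_LO g = 1 + g * (G_LO g) ^ (D + 1))
    (hN : ∀ g ∈ Set.Ico (0 : ℝ) ((D : ℝ) ^ D / ((D : ℝ) + 1) ^ (D + 1)),
      G_NLO g = ((D : ℝ) * ((D : ℝ) + 1) / 2) * g ^ 2 * (G_LO g) ^ (2 * D + 2) /
        ((2 - G_LO g) * (1 - g * D * (G_LO g) ^ (D + 1)))) :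
    ∃ a : ℕ → ℝ,
      (∀ p : ℕ, 0 ≤ a p) ∧
      (∃ r : ℝ, 0 < r ∧ ∀ x ∈ Set.Ico (0 : ℝ) r,
        HasSum (fun p : ℕ => a p * x ^ p) (G_NLO x)) ∧
      (∀ x : ℝ, |x| < (D : ℝ) ^ D / ((D : ℝ) + 1) ^ (D + 1) →
        Summable fun p : ℕ => a p * x ^ p) ∧
      (∀ x : ℝ, (D : ℝ) ^ D / ((D : ℝ) + 1) ^ (D + 1) < |x| →
        ¬ Summable fun p : ℕ => a p * x ^ p) := by
  have hD₀ : 0 < D := by omega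
  have hNLO : ∀ x ∈ Set.Ico 0 (criticalCoupling D), HasAbsSumAt (nloSeries D) x (G_NLO x) := by
    intro x hx
    obtain ⟨hG₁, hGeq⟩ := hG x (Set.Ico_subset_Icc_self hx)
    rw [hN x hx]
    exact hasAbsSumAt_nloSeries hD₀ hx.1 hx.2 ⟨zero_le_one.trans hG₁.1, hG₁.2⟩ hGeq
  refine ⟨fun n => coeff n (nloSeries D), coeffsNonneg_nloSeries,
    ⟨criticalCoupling D, criticalCoupling_pos, fun x hx => (hNLO x hx).2⟩,
    fun x hx => ?_, fun x hx => not_summable_nloSeries hD₀ hx⟩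
  exact (hNLO |x| ⟨abs_nonneg x, hx⟩).summable_of_abs_le le_rfl
end
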